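/- arXiv:2103.13010 — 2 statements merged into one kernel-verified Lean document; each statement's English description precedes it below -/
import Mathlib

section
/- With C and C_l defined as in the robust knapsack decomposition, the robust binary knapsack problem max{ sum_j w_j x_j : x in C } has optimal value equal to the maximum over l in {Gamma, Gamma+1, ..., n-1, n+1} of the ordinary binary knapsack optimal values max{ sum_j w_j x_j : x in C_l }. -/
/-!
For a 0/1 vector `x` and nonincreasing deviations `b`, split `b j = b l + (b j - b l)`: for every
admissible `l` the quantity `Γ b_l + ∑_{j ≤ l} (b_j - b_l) x_j` of `C_l` bounds the worst-case
deviation `∑_{j ∈ R} b_j x_j` over `|R| ≤ Γ`, because `b_j ≤ b_l` beyond `l` and `0 ≤ b_l`.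
The bound is attained by `l = n + 1` when the support of `x` has at most `Γ` elements, and
otherwise by any `l < n` such that `[1, l]` contains exactly `Γ` elements of the support (a
discrete intermediate value argument); such an `l` is at least `Γ`. Hence `C` is the union of the sets `C_l`, and the optimum over a finite
union is the largest of the optima.
-/

open Finset

/-- Worst-case (cardinality-constrained) extra term. -/
noncomputable def robustMax {ι : Type*} [DecidableEq ι] (N : Finset ι) (Γ : ℕ) (f : ι → ℝ) : ℝ :=
  (N.powerset.filter fun R => R.card ≤ Γ).sup' ⟨∅, by simp⟩ fun R => ∑ j ∈ R, f j

/-- Robust binary knapsack feasible set. -/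
def robC (n Γ : ℕ) (d b : ℕ → ℝ) (s : ℝ) : Set (ℕ → ℝ) :=
  {x | (∀ j ∈ Finset.Icc 1 n, x j = 0 ∨ x j = 1) ∧
    ∑ j ∈ Finset.Icc 1 n, d j * x j
      + robustMax (Finset.Icc 1 n) Γ (fun j => b j * x j) ≤ s}

/-- Nominal knapsack feasible set `C_l`. -/
def nomC (n Γ l : ℕ) (d b : ℕ → ℝ) (s : ℝ) : Set (ℕ → ℝ) :=
  {x | (∀ j ∈ Finset.Icc 1 n, x j = 0 ∨ x j = 1) ∧
    ∑ j ∈ Finset.Icc 1 n, d j * x j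
      + ∑ j ∈ Finset.Icc 1 (min l n), (b j - b l) * x j ≤ s - (Γ : ℝ) * b l}

lemma exists_lt_apply_eq_of_map_add_one_le {f : ℕ → ℕ} (hf : ∀ k, f (k + 1) ≤ f k + 1)
    {m : ℕ} (h0 : f 0 ≤ m) : ∀ {n}, m < f n → ∃ k < n, f k = m
  | 0, hn => absurd h0 (not_le.2 hn)
  | n + 1, hn => by
    by_cases h : m < f n
    · obtain ⟨k, hk, hfk⟩ := exists_lt_apply_eq_of_map_add_one_le hf h0 h
      exact ⟨k, by omega, hfk⟩
    · exact ⟨n, by omega, by have := hf n; omega⟩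

/-- `h0` makes up for the junk value `sSup ∅ = 0` of empty members of the family. -/
lemma csSup_biUnion_eq_sup' {ι : Type*} {L : Finset ι} (hL : L.Nonempty) {A : ι → Set ℝ}
    (hA : ∀ l ∈ L, BddAbove (A l)) (h0 : ∃ t ∈ ⋃ l ∈ L, A l, 0 ≤ t) :
    sSup (⋃ l ∈ L, A l) = L.sup' hL fun l => sSup (A l) := by
  obtain ⟨t, ht, ht0⟩ := h0
  have hbdd : BddAbove (⋃ l ∈ L, A l) := (L.finite_toSet.bddAbove_biUnion).2 hA
  apply le_antisymm
  · refine csSup_le ⟨t, ht⟩ fun u hu => ?_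
    obtain ⟨l, hl, hu⟩ := Set.mem_iUnion₂.1 hu
    exact (le_csSup (hA l hl) hu).trans (le_sup' (fun l => sSup (A l)) hl)
  · refine sup'_le _ _ fun l hl => ?_
    rcases (A l).eq_empty_or_nonempty with he | hne
    · rw [he, Real.sSup_empty]
      exact ht0.trans (le_csSup hbdd ht)
    · exact csSup_le_csSup hbdd hne (Set.subset_biUnion_of_mem (u := A) hl)

section RobustMax

variable {ι : Type*} [DecidableEq ι] {N : Finset ι} {Γ : ℕ} {f : ι → ℝ}

lemma le_robustMax {R : Finset ι} (hRN : R ⊆ N) (hR : #R ≤ Γ) :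
    ∑ j ∈ R, f j ≤ robustMax N Γ f :=
  le_sup' (fun R => ∑ j ∈ R, f j) (mem_filter.2 ⟨mem_powerset.2 hRN, hR⟩)

lemma robustMax_le_iff {c : ℝ} :
    robustMax N Γ f ≤ c ↔ ∀ R ⊆ N, #R ≤ Γ → ∑ j ∈ R, f j ≤ c :=
  ⟨fun h _ hRN hR => (le_robustMax hRN hR).trans h, fun h =>
    sup'_le _ _ fun R hR => h R (mem_powerset.1 (mem_filter.1 hR).1) (mem_filter.1 hR).2⟩

@[simp]
lemma robustMax_zero : robustMax N Γ (fun _ => 0) = 0 :=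
  le_antisymm (robustMax_le_iff.2 fun _ _ _ => by simp)
    (by simpa using le_robustMax (f := fun _ => (0 : ℝ)) (empty_subset N) (Nat.zero_le Γ))

end RobustMax

noncomputable def nomBound (n Γ l : ℕ) (b x : ℕ → ℝ) : ℝ :=
  Γ * b l + ∑ j ∈ Icc 1 (min l n), (b j - b l) * x j

lemma mem_nomC_iff {n Γ l : ℕ} {d b : ℕ → ℝ} {s : ℝ} {x : ℕ → ℝ} :
    x ∈ nomC n Γ l d b s ↔ (∀ j ∈ Icc 1 n, x j = 0 ∨ x j = 1) ∧
      ∑ j ∈ Icc 1 n, d j * x j + nomBound n Γ l b x ≤ s := by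
  simp only [nomC, nomBound, Set.mem_ofPred_eq]
  exact and_congr_right fun _ => by constructor <;> intro <;> linarith

lemma zero_mem_robC {n Γ : ℕ} {d b : ℕ → ℝ} {s : ℝ} (hs : 0 ≤ s) : 0 ∈ robC n Γ d b s :=
  ⟨fun _ _ => Or.inl rfl, by simpa using hs⟩

lemma bddAbove_sum_mul {n : ℕ} (w : ℕ → ℝ) {X : Set (ℕ → ℝ)}
    (hX : ∀ x ∈ X, ∀ j ∈ Icc 1 n, x j = 0 ∨ x j = 1) :
    BddAbove {t | ∃ x ∈ X, t = ∑ j ∈ Icc 1 n, w j * x j} := by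
  refine ⟨∑ j ∈ Icc 1 n, |w j|, ?_⟩
  rintro t ⟨x, hx, rfl⟩
  refine sum_le_sum fun j hj => ?_
  rcases hX x hx j hj with h | h <;> simp [h, le_abs_self]

lemma sum_Icc_min_mul_eq_sum_support {n : ℕ} {x : ℕ → ℝ}
    (hx : ∀ j ∈ Icc 1 n, x j = 0 ∨ x j = 1) (g : ℕ → ℝ) (l : ℕ) :
    ∑ j ∈ Icc 1 (min l n), g j * x j = ∑ j ∈ ((Icc 1 n).filter (x · = 1)).filter (· ≤ l), g j := by
  have hIcc : Icc 1 (min l n) = (Icc 1 n).filter (· ≤ l) := by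
    ext j; simp only [mem_Icc, mem_filter]; omega
  rw [hIcc, filter_filter, sum_filter, sum_filter]
  refine sum_congr rfl fun j hj => ?_
  rcases hx j hj with h | h <;> simp [h]

section SortedDeviations

variable {n Γ : ℕ} {b : ℕ → ℝ}

lemma sum_le_nomBound (hsort : ∀ j k, 1 ≤ j → j ≤ k → k ≤ n + 1 → b k ≤ b j)
    (hbn : b (n + 1) = 0) {x : ℕ → ℝ} (hx : ∀ j ∈ Icc 1 n, x j ∈ Set.Icc 0 1) {l : ℕ}
    (hΓl : Γ ≤ l) (hl : l ≤ n + 1) {R : Finset ℕ} (hRN : R ⊆ Icc 1 n) (hR : #R ≤ Γ) :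
    ∑ j ∈ R, b j * x j ≤ nomBound n Γ l b x := by
  rcases l.eq_zero_or_pos with rfl | hl1
  · simp [card_eq_zero.1 (Nat.le_zero.1 (hR.trans hΓl)), nomBound, Nat.le_zero.1 hΓl]
  have hbl : 0 ≤ b l := hbn ▸ hsort l (n + 1) hl1 hl le_rfl
  have hRfilter : R.filter (· ≤ l) ⊆ Icc 1 (min l n) := fun j hj => by
    obtain ⟨hjR, hjl⟩ := mem_filter.1 hj
    have := mem_Icc.1 (hRN hjR)
    exact mem_Icc.2 ⟨this.1, le_min hjl this.2⟩
  calc ∑ j ∈ R, b j * x j = ∑ j ∈ R, (b l * x j + (b j - b l) * x j) :=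
        sum_congr rfl fun _ _ => by ring
    _ ≤ ∑ j ∈ R, (b l + if j ≤ l then (b j - b l) * x j else 0) := by
        refine sum_le_sum fun j hj => ?_
        have hjN := mem_Icc.1 (hRN hj)
        obtain ⟨hx0, hx1⟩ := hx j (hRN hj)
        gcongr
        · exact mul_le_of_le_one_right hbl hx1
        · split_ifs with hjl
          · exact le_rfl
          · exact mul_nonpos_of_nonpos_of_nonneg
              (sub_nonpos.2 (hsort l j hl1 (by omega) (by omega))) hx0
    _ = #R * b l + ∑ j ∈ R.filter (· ≤ l), (b j - b l) * x j := by
        rw [sum_add_distrib, sum_const, nsmul_eq_mul, sum_filter]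
    _ ≤ Γ * b l + ∑ j ∈ Icc 1 (min l n), (b j - b l) * x j := by
        refine add_le_add (by gcongr) ?_
        refine sum_le_sum_of_subset_of_nonneg hRfilter fun j hj _ => ?_
        have hjl := mem_Icc.1 hj
        exact mul_nonneg (sub_nonneg.2 (hsort j l hjl.1 (by omega) hl))
          (hx j (mem_Icc.2 ⟨hjl.1, by omega⟩)).1

lemma robustMax_le_nomBound (hsort : ∀ j k, 1 ≤ j → j ≤ k → k ≤ n + 1 → b k ≤ b j)
    (hbn : b (n + 1) = 0) (hΓ : Γ ≤ n) {x : ℕ → ℝ} (hx : ∀ j ∈ Icc 1 n, x j ∈ Set.Icc 0 1)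
    {l : ℕ} (hl : l ∈ insert (n + 1) (Ico Γ n)) :
    robustMax (Icc 1 n) Γ (fun j => b j * x j) ≤ nomBound n Γ l b x := by
  have hl' : Γ ≤ l ∧ l ≤ n + 1 := by
    rcases mem_insert.1 hl with rfl | hl
    · omega
    · have := mem_Ico.1 hl; omega
  exact robustMax_le_iff.2 fun R hRN hR => sum_le_nomBound hsort hbn hx hl'.1 hl'.2 hRN hR

lemma nomBound_eq_sum_support {x : ℕ → ℝ} (hx : ∀ j ∈ Icc 1 n, x j = 0 ∨ x j = 1) (l : ℕ) :
    nomBound n Γ l b x = ∑ j ∈ ((Icc 1 n).filter (x · = 1)).filter (· ≤ l), b j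
      + (Γ - #(((Icc 1 n).filter (x · = 1)).filter (· ≤ l))) * b l := by
  rw [nomBound, sum_Icc_min_mul_eq_sum_support hx, sum_sub_distrib, sum_const, nsmul_eq_mul]
  ring

lemma exists_nomBound_le_robustMax (hbn : b (n + 1) = 0) {x : ℕ → ℝ}
    (hx : ∀ j ∈ Icc 1 n, x j = 0 ∨ x j = 1) :
    ∃ l ∈ insert (n + 1) (Ico Γ n),
      nomBound n Γ l b x ≤ robustMax (Icc 1 n) Γ (fun j => b j * x j) := by
  set S := (Icc 1 n).filter (x · = 1)
  have hattained : ∀ l, #(S.filter (· ≤ l)) ≤ Γ → (Γ - #(S.filter (· ≤ l)) : ℝ) * b l = 0 →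
      nomBound n Γ l b x ≤ robustMax (Icc 1 n) Γ (fun j => b j * x j) := by
    intro l hc hb
    have hx1 : ∑ j ∈ S.filter (· ≤ l), b j = ∑ j ∈ S.filter (· ≤ l), b j * x j :=
      sum_congr rfl fun j hj => by rw [(mem_filter.1 (mem_filter.1 hj).1).2, mul_one]
    rw [nomBound_eq_sum_support hx, hb, add_zero, hx1]
    exact le_robustMax ((filter_subset _ _).trans (filter_subset _ _)) hc
  by_cases hSΓ : #S ≤ Γ
  · exact ⟨n + 1, mem_insert_self _ _, hattained _ ((card_filter_le _ _).trans hSΓ) (by simp [hbn])⟩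
  have hS : ∀ j ∈ S, 1 ≤ j ∧ j ≤ n := fun j hj => mem_Icc.1 (mem_filter.1 hj).1
  have hstep : ∀ k, #(S.filter (· ≤ k + 1)) ≤ #(S.filter (· ≤ k)) + 1 := fun k =>
    (card_le_card fun j hj => by
      simp only [mem_filter, mem_insert] at hj ⊢
      exact (eq_or_lt_of_le hj.2).imp id fun h => ⟨hj.1, Nat.le_of_lt_succ h⟩).trans
      (card_insert_le (k + 1) (S.filter (· ≤ k)))
  have h0 : #(S.filter (· ≤ 0)) ≤ Γ := by
    rw [filter_false_of_mem fun j hj => by have := hS j hj; omega, card_empty]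
    exact Nat.zero_le Γ
  have hn : Γ < #(S.filter (· ≤ n)) := by
    rwa [filter_true_of_mem fun j hj => (hS j hj).2, ← not_le]
  obtain ⟨l, hln, hl⟩ := exists_lt_apply_eq_of_map_add_one_le
    (f := fun l => #(S.filter (· ≤ l))) hstep h0 hn
  have hΓl : Γ ≤ l := hl ▸ (card_le_card fun j hj => mem_Icc.2
    ⟨(hS j (mem_filter.1 hj).1).1, (mem_filter.1 hj).2⟩).trans (Nat.card_Icc 1 l).le
  exact ⟨l, mem_insert_of_mem (mem_Ico.2 ⟨hΓl, hln⟩), hattained l hl.le (by simp [hl])⟩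

lemma robC_eq_biUnion_nomC (d : ℕ → ℝ) (s : ℝ)
    (hsort : ∀ j k, 1 ≤ j → j ≤ k → k ≤ n + 1 → b k ≤ b j) (hbn : b (n + 1) = 0)
    (hΓ : Γ ≤ n) :
    robC n Γ d b s = ⋃ l ∈ insert (n + 1) (Ico Γ n), nomC n Γ l d b s := by
  ext x
  simp only [Set.mem_iUnion, mem_nomC_iff, exists_prop]
  constructor
  · rintro ⟨hx, hxs⟩
    obtain ⟨l, hl, hle⟩ := exists_nomBound_le_robustMax hbn hx
    exact ⟨l, hl, hx, by linarith⟩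
  · rintro ⟨l, hl, hx, hxs⟩
    have hx01 : ∀ j ∈ Icc 1 n, x j ∈ Set.Icc 0 1 := fun j hj => by
      rcases hx j hj with h | h <;> simp [h]
    exact ⟨hx, by linarith [robustMax_le_nomBound hsort hbn hΓ hx01 hl]⟩

end SortedDeviations

theorem stmt4_general (n Γ : ℕ) (w d b : ℕ → ℝ) (s : ℝ)
    (hsort : ∀ j k, 1 ≤ j → j ≤ k → k ≤ n + 1 → b k ≤ b j)
    (hbn : b (n + 1) = 0)
    (hΓ : Γ ≤ n) (hs : 0 ≤ s) :
    sSup {t : ℝ | ∃ x ∈ robC n Γ d b s, t = ∑ j ∈ Finset.Icc 1 n, w j * x j} =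
      (insert (n + 1) (Finset.Ico Γ n)).sup' ⟨n + 1, Finset.mem_insert_self _ _⟩
        (fun l => sSup {t : ℝ | ∃ x ∈ nomC n Γ l d b s,
          t = ∑ j ∈ Finset.Icc 1 n, w j * x j}) := by
  have hvalues : {t : ℝ | ∃ x ∈ robC n Γ d b s, t = ∑ j ∈ Icc 1 n, w j * x j} =
      ⋃ l ∈ insert (n + 1) (Ico Γ n),
        {t : ℝ | ∃ x ∈ nomC n Γ l d b s, t = ∑ j ∈ Icc 1 n, w j * x j} := by
    ext t
    simp only [robC_eq_biUnion_nomC d s hsort hbn hΓ, Set.mem_iUnion, Set.mem_ofPred_eq,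
      exists_prop]
    grind
  have hzero : (0 : ℝ) ∈ {t : ℝ | ∃ x ∈ robC n Γ d b s, t = ∑ j ∈ Icc 1 n, w j * x j} :=
    ⟨0, zero_mem_robC hs, by simp⟩
  rw [hvalues] at hzero ⊢
  exact csSup_biUnion_eq_sup' _ (fun l _ => bddAbove_sum_mul w fun x hx => hx.1) ⟨0, hzero, le_rfl⟩

/-- The robust binary knapsack optimal value equals the maximum over
`l ∈ {Γ, …, n-1, n+1}` of the ordinary binary knapsack optimal values. -/
theorem stmt4 (n Γ : ℕ) (w d b : ℕ → ℝ) (s : ℝ)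
    (hsort : ∀ j k, 1 ≤ j → j ≤ k → k ≤ n + 1 → b k ≤ b j)
    (hbn : b (n + 1) = 0)
    (hd : ∀ j ∈ Finset.Icc 1 n, 0 ≤ d j)
    (hΓ : Γ ≤ n) (hs : 0 ≤ s) :
    sSup {t : ℝ | ∃ x ∈ robC n Γ d b s, t = ∑ j ∈ Finset.Icc 1 n, w j * x j} =
      (insert (n + 1) (Finset.Ico Γ n)).sup' ⟨n + 1, Finset.mem_insert_self _ _⟩
        (fun l => sSup {t : ℝ | ∃ x ∈ nomC n Γ l d b s,
          t = ∑ j ∈ Finset.Icc 1 n, w j * x j}) :=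
  stmt4_general n Γ w d b s hsort hbn hΓ hs
end

section
/- The LP relaxation bound of the allocation-based formulation AP is at least as large as the LP relaxation bound of the compact robust formulation RP1 (and hence of RP2): Z_LP(AP) >= Z_LP(RP1) = Z_LP(RP2). -/
/-!
Aggregating an AP solution pattern by pattern, `x i j = ∑_{R ∋ j} z i R` and
`y i = ∑_R z i R`, gives an RP1 solution of the same cost: every feasible pattern `R`
satisfies the robust capacity constraint for each `R₀` with `|R₀| ≤ Γ i`, because
`∑_{R₀ ∩ R} b ≤ robustMax R (Γ i) b`, and that constraint is linear in `(x, y)`.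

`RP1 = RP2` is Bertsimas–Sim duality: `max_{|R| ≤ Γ} ∑_R a = min_{q ≥ 0} Γ q + ∑_j (a j - q)⁺`.
For the nontrivial inequality take an optimal `T` and a threshold `q ≥ 0` separating the
values inside `T` from those outside; `q` can be `0` unless `|T| = Γ`.
-/

open Finset
open scoped Classical

theorem sum_le_robustMax {ι : Type*} [DecidableEq ι] {N R : Finset ι} {Γ : ℕ} (f : ι → ℝ)
    (hRN : R ⊆ N) (hR : R.card ≤ Γ) : ∑ j ∈ R, f j ≤ robustMax N Γ f :=
  le_sup' (fun R => ∑ j ∈ R, f j) (mem_filter.2 ⟨mem_powerset.2 hRN, hR⟩)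

section BertsimasSim

variable {κ : Type*} [Fintype κ] (a : κ → ℝ) (Γ : ℕ)

theorem exists_card_le_forall_sum_le :
    ∃ T : Finset κ, T.card ≤ Γ ∧ ∀ R : Finset κ, R.card ≤ Γ → ∑ j ∈ R, a j ≤ ∑ j ∈ T, a j := by
  obtain ⟨T, hT, hmax⟩ := (univ.powerset.filter fun R : Finset κ => R.card ≤ Γ).exists_max_image
    (fun R => ∑ j ∈ R, a j) ⟨∅, by simp⟩
  exact ⟨T, (mem_filter.1 hT).2, fun R hR => hmax R (by simp [hR])⟩

variable {a Γ}

theorem exists_threshold_of_forall_sum_le {T : Finset κ} (hT : T.card ≤ Γ)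
    (hmax : ∀ R : Finset κ, R.card ≤ Γ → ∑ j ∈ R, a j ≤ ∑ j ∈ T, a j) :
    ∃ q, 0 ≤ q ∧ (∀ j ∈ T, q ≤ a j) ∧ (∀ k ∉ T, a k ≤ q) ∧ (Γ : ℝ) * q ≤ T.card * q := by
  have inside_nonneg : ∀ j ∈ T, 0 ≤ a j := fun j hj => by
    have := hmax (T.erase j) ((card_erase_le).trans hT)
    rw [sum_erase_eq_sub hj] at this
    linarith
  have outside_le_inside : ∀ k ∉ T, ∀ j ∈ T, a k ≤ a j := fun k hk j hj => by
    have hcard : (insert k (T.erase j)).card ≤ Γ := by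
      rw [card_insert_of_notMem (fun h => hk (mem_of_mem_erase h)), card_erase_of_mem hj]
      have := card_pos.2 ⟨j, hj⟩
      omega
    have := hmax _ hcard
    rw [sum_insert (fun h => hk (mem_of_mem_erase h)), sum_erase_eq_sub hj] at this
    linarith
  have outside_nonpos : T.card < Γ → ∀ k ∉ T, a k ≤ 0 := fun hlt k hk => by
    have := hmax (insert k T) ((card_insert_le _ _).trans hlt)
    rw [sum_insert hk] at this
    linarith
  set q := (insert 0 ((univ \ T).image a)).max' (insert_nonempty _ _)
  have hq0 : 0 ≤ q := le_max' _ _ (mem_insert_self _ _)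
  have hq : ∀ k ∉ T, a k ≤ q := fun k hk =>
    le_max' _ _ (mem_insert_of_mem (mem_image_of_mem a (by simpa using hk)))
  refine ⟨q, hq0, fun j hj => max'_le _ _ _ ?_, hq, ?_⟩
  · simpa using ⟨inside_nonneg j hj, fun k hk => outside_le_inside k hk j hj⟩
  · rcases hT.lt_or_eq with hlt | heq
    · have hq_eq : q = 0 := le_antisymm (max'_le _ _ _ (by simpa using outside_nonpos hlt)) hq0
      simp [hq_eq]
    · rw [heq]

variable (a Γ)

theorem exists_dual_le_sum :
    ∃ q, 0 ≤ q ∧ ∃ T : Finset κ, T.card ≤ Γ ∧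
      ∑ j, max (a j - q) 0 + Γ * q ≤ ∑ j ∈ T, a j := by
  obtain ⟨T, hT, hmax⟩ := exists_card_le_forall_sum_le a Γ
  obtain ⟨q, hq0, hin, hout, hΓ⟩ := exists_threshold_of_forall_sum_le hT hmax
  have hsum : ∑ j, max (a j - q) 0 = ∑ j ∈ T, a j - T.card * q := by
    rw [← sum_subset (subset_univ T) fun k _ hk => max_eq_right (by linarith [hout k hk]),
      sum_congr rfl fun j hj => max_eq_left (by linarith [hin j hj]), sum_sub_distrib,
      sum_const, nsmul_eq_mul]
  exact ⟨q, hq0, T, hT, by linarith⟩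

variable {a Γ}

theorem sum_le_of_le_add {p : κ → ℝ} {q : ℝ} (hp : ∀ j, 0 ≤ p j) (hq : 0 ≤ q)
    (hpq : ∀ j, a j ≤ q + p j) {R : Finset κ} (hR : R.card ≤ Γ) :
    ∑ j ∈ R, a j ≤ ∑ j, p j + Γ * q :=
  calc ∑ j ∈ R, a j ≤ ∑ j ∈ R, (q + p j) := sum_le_sum fun j _ => hpq j
    _ = R.card * q + ∑ j ∈ R, p j := by rw [sum_add_distrib, sum_const, nsmul_eq_mul]
    _ ≤ Γ * q + ∑ j, p j := add_le_add
        (mul_le_mul_of_nonneg_right (by exact_mod_cast hR) hq)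
        (sum_le_sum_of_subset_of_nonneg (subset_univ R) fun j _ _ => hp j)
    _ = ∑ j, p j + Γ * q := add_comm _ _

theorem forall_card_le_add_sum_le_iff {D C : ℝ} :
    (∀ R : Finset κ, R.card ≤ Γ → D + ∑ j ∈ R, a j ≤ C) ↔
      ∃ p : κ → ℝ, ∃ q : ℝ, (∀ j, 0 ≤ p j) ∧ 0 ≤ q ∧ (∀ j, a j ≤ q + p j) ∧
        D + ∑ j, p j + Γ * q ≤ C := by
  constructor
  · intro h
    obtain ⟨q, hq, T, hT, hdual⟩ := exists_dual_le_sum a Γ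
    refine ⟨fun j => max (a j - q) 0, q, fun j => le_max_right _ _, hq,
      fun j => by linarith [le_max_left (a j - q) 0], ?_⟩
    linarith [h T hT]
  · rintro ⟨p, q, hp, hq, hpq, hC⟩ R hR
    linarith [sum_le_of_le_add hp hq hpq hR]

end BertsimasSim

section Patterns

variable {κ : Type*} [DecidableEq κ]

/-- The paper's `x i j = ∑_{R ∈ S, j ∈ R} z i R` for one facility. -/
def coverage {M : Type*} [AddCommMonoid M] (S : Finset (Finset κ)) (z : Finset κ → M)
    (j : κ) : M :=
  ∑ R ∈ S.filter (fun R => j ∈ R), z R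

theorem sum_mul_coverage {M : Type*} [NonUnitalNonAssocSemiring M] (S : Finset (Finset κ))
    (z : Finset κ → M) (w : κ → M) (J : Finset κ) :
    ∑ j ∈ J, w j * coverage S z j = ∑ R ∈ S, (∑ j ∈ J ∩ R, w j) * z R := by
  simp only [coverage, mul_sum, sum_mul, sum_filter, ← filter_mem_eq_inter, mul_ite, ite_mul,
    mul_zero, zero_mul]
  exact sum_comm

variable {S : Finset (Finset κ)} {z : Finset κ → ℝ}

theorem coverage_nonneg (hz : ∀ R ∈ S, 0 ≤ z R) (j : κ) : 0 ≤ coverage S z j :=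
  sum_nonneg fun R hR => hz R (mem_of_mem_filter R hR)

theorem coverage_le_sum (hz : ∀ R ∈ S, 0 ≤ z R) (j : κ) : coverage S z j ≤ ∑ R ∈ S, z R :=
  sum_le_sum_of_subset_of_nonneg (filter_subset _ _) fun R hR _ => hz R hR

variable [Fintype κ]

theorem sum_mul_coverage_add_mul_sum (c : κ → ℝ) (f : ℝ) :
    ∑ j, c j * coverage S z j + f * ∑ R ∈ S, z R = ∑ R ∈ S, (f + ∑ j ∈ R, c j) * z R := by
  rw [sum_mul_coverage, mul_sum, ← sum_add_distrib]
  exact sum_congr rfl fun R _ => by rw [univ_inter]; ring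

theorem robust_capacity_coverage {d b : κ → ℝ} {s : ℝ} {Γ : ℕ} (hz : ∀ R ∈ S, 0 ≤ z R)
    (hS : ∀ R ∈ S, ∑ j ∈ R, d j + robustMax R Γ b ≤ s) {R₀ : Finset κ} (hR₀ : R₀.card ≤ Γ) :
    ∑ j, d j * coverage S z j + ∑ j ∈ R₀, b j * coverage S z j ≤ s * ∑ R ∈ S, z R := by
  rw [sum_mul_coverage, sum_mul_coverage, ← sum_add_distrib, mul_sum]
  refine sum_le_sum fun R hR => ?_
  rw [← add_mul, univ_inter]
  refine mul_le_mul_of_nonneg_right ?_ (hz R hR)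
  have := sum_le_robustMax (N := R) b inter_subset_right
    ((card_le_card inter_subset_left).trans hR₀)
  linarith [hS R hR]

end Patterns

theorem stmt14_general {ι κ : Type*} [Fintype ι] [Fintype κ] [DecidableEq κ]
    (c : ι → κ → ℝ) (f : ι → ℝ) (s : ι → ℝ) (d b : κ → ℝ) (Γ : ι → ℕ)
    (Sfin : ι → Finset (Finset κ))
    (hS : ∀ i, Sfin i = Finset.univ.powerset.filter
      (fun R => ∑ j ∈ R, d j + robustMax R (Γ i) b ≤ s i))
    (APval RP1val RP2val : Set ℝ)
    (hAP : APval = {t : ℝ | ∃ z : ι → Finset κ → ℝ, ∃ v : ι → ℝ,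
      (∀ i R, 0 ≤ z i R) ∧ (∀ i, 0 ≤ v i) ∧
      (∀ j : κ, ∑ i, ∑ R ∈ (Sfin i).filter (fun R => j ∈ R), z i R = 1) ∧
      (∀ i, ∑ R ∈ Sfin i, z i R + v i = 1) ∧
      t = ∑ i, ∑ R ∈ Sfin i, (f i + ∑ j ∈ R, c i j) * z i R})
    (hRP1 : RP1val = {t : ℝ | ∃ x : ι → κ → ℝ, ∃ y : ι → ℝ,
      (∀ i j, 0 ≤ x i j ∧ x i j ≤ 1) ∧ (∀ i, 0 ≤ y i ∧ y i ≤ 1) ∧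
      (∀ j : κ, ∑ i, x i j = 1) ∧ (∀ i j, x i j ≤ y i) ∧
      (∀ i, ∀ R : Finset κ, R.card ≤ Γ i →
        ∑ j, d j * x i j + ∑ j ∈ R, b j * x i j ≤ s i * y i) ∧
      t = ∑ i, ∑ j, c i j * x i j + ∑ i, f i * y i})
    (hRP2 : RP2val = {t : ℝ | ∃ x : ι → κ → ℝ, ∃ y : ι → ℝ,
      ∃ p : ι → κ → ℝ, ∃ q : ι → ℝ,
      (∀ i j, 0 ≤ x i j ∧ x i j ≤ 1) ∧ (∀ i, 0 ≤ y i ∧ y i ≤ 1) ∧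
      (∀ j : κ, ∑ i, x i j = 1) ∧ (∀ i j, x i j ≤ y i) ∧
      (∀ i j, 0 ≤ p i j) ∧ (∀ i, 0 ≤ q i) ∧
      (∀ i j, b j * x i j ≤ q i + p i j) ∧
      (∀ i, ∑ j, d j * x i j + ∑ j, p i j + (Γ i : ℝ) * q i ≤ s i * y i) ∧
      t = ∑ i, ∑ j, c i j * x i j + ∑ i, f i * y i}) :
    (∀ t ∈ APval, ∃ t' ∈ RP1val, t' ≤ t) ∧ RP1val = RP2val := by
  subst hAP hRP1 hRP2
  refine ⟨?_, Set.ext fun t => ⟨?_, ?_⟩⟩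
  · rintro t ⟨z, v, hz, hv, hassign, hconv, rfl⟩
    have hpattern : ∀ i, ∀ R ∈ Sfin i, ∑ j ∈ R, d j + robustMax R (Γ i) b ≤ s i :=
      fun i R hR => by rw [hS i] at hR; exact (mem_filter.1 hR).2
    set x := fun i => coverage (Sfin i) (z i)
    have hx0 : ∀ i j, 0 ≤ x i j := fun i => coverage_nonneg fun R _ => hz i R
    refine ⟨_, ⟨x, fun i => ∑ R ∈ Sfin i, z i R,
      fun i j => ⟨hx0 i j, hassign j ▸ single_le_sum (fun i _ => hx0 i j) (mem_univ i)⟩,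
      fun i => ⟨sum_nonneg fun R _ => hz i R, by linarith [hconv i, hv i]⟩, hassign,
      fun i => coverage_le_sum fun R _ => hz i R,
      fun i _ => robust_capacity_coverage (fun R _ => hz i R) (hpattern i), rfl⟩, le_of_eq ?_⟩
    rw [← sum_add_distrib]
    exact sum_congr rfl fun i _ => sum_mul_coverage_add_mul_sum (c i) (f i)
  · rintro ⟨x, y, hx, hy, hassign, hxy, hcap, rfl⟩
    choose p q hp hq hpq hcap' using fun i => forall_card_le_add_sum_le_iff.1 (hcap i)
    exact ⟨x, y, p, q, hx, hy, hassign, hxy, hp, hq, hpq, hcap', rfl⟩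
  · rintro ⟨x, y, p, q, hx, hy, hassign, hxy, hp, hq, hpq, hcap, rfl⟩
    exact ⟨x, y, hx, hy, hassign, hxy,
      fun i => forall_card_le_add_sum_le_iff.2 ⟨p i, q i, hp i, hq i, hpq i, hcap i⟩, rfl⟩

/-- The LP bound of the allocation formulation AP dominates the LP bound of the
compact robust formulation RP1, whose LP bound coincides with that of the
Bertsimas–Sim reformulation RP2. -/
theorem stmt14 {ι κ : Type*} [Fintype ι] [Fintype κ] [DecidableEq κ]
    (c : ι → κ → ℝ) (f : ι → ℝ) (s : ι → ℝ) (d b : κ → ℝ) (Γ : ι → ℕ)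
    (hd : ∀ j, 0 ≤ d j) (hb : ∀ j, 0 ≤ b j) (hs : ∀ i, 0 ≤ s i)
    (hc : ∀ i j, 0 ≤ c i j) (hf : ∀ i, 0 ≤ f i)
    (Sfin : ι → Finset (Finset κ))
    (hS : ∀ i, Sfin i = Finset.univ.powerset.filter
      (fun R => ∑ j ∈ R, d j + robustMax R (Γ i) b ≤ s i))
    (APval RP1val RP2val : Set ℝ)
    (hAP : APval = {t : ℝ | ∃ z : ι → Finset κ → ℝ, ∃ v : ι → ℝ,
      (∀ i R, 0 ≤ z i R) ∧ (∀ i, 0 ≤ v i) ∧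
      (∀ j : κ, ∑ i, ∑ R ∈ (Sfin i).filter (fun R => j ∈ R), z i R = 1) ∧
      (∀ i, ∑ R ∈ Sfin i, z i R + v i = 1) ∧
      t = ∑ i, ∑ R ∈ Sfin i, (f i + ∑ j ∈ R, c i j) * z i R})
    (hRP1 : RP1val = {t : ℝ | ∃ x : ι → κ → ℝ, ∃ y : ι → ℝ,
      (∀ i j, 0 ≤ x i j ∧ x i j ≤ 1) ∧ (∀ i, 0 ≤ y i ∧ y i ≤ 1) ∧
      (∀ j : κ, ∑ i, x i j = 1) ∧ (∀ i j, x i j ≤ y i) ∧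
      (∀ i, ∀ R : Finset κ, R.card ≤ Γ i →
        ∑ j, d j * x i j + ∑ j ∈ R, b j * x i j ≤ s i * y i) ∧
      t = ∑ i, ∑ j, c i j * x i j + ∑ i, f i * y i})
    (hRP2 : RP2val = {t : ℝ | ∃ x : ι → κ → ℝ, ∃ y : ι → ℝ,
      ∃ p : ι → κ → ℝ, ∃ q : ι → ℝ,
      (∀ i j, 0 ≤ x i j ∧ x i j ≤ 1) ∧ (∀ i, 0 ≤ y i ∧ y i ≤ 1) ∧
      (∀ j : κ, ∑ i, x i j = 1) ∧ (∀ i j, x i j ≤ y i) ∧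
      (∀ i j, 0 ≤ p i j) ∧ (∀ i, 0 ≤ q i) ∧
      (∀ i j, b j * x i j ≤ q i + p i j) ∧
      (∀ i, ∑ j, d j * x i j + ∑ j, p i j + (Γ i : ℝ) * q i ≤ s i * y i) ∧
      t = ∑ i, ∑ j, c i j * x i j + ∑ i, f i * y i}) :
    (∀ t ∈ APval, ∃ t' ∈ RP1val, t' ≤ t) ∧ RP1val = RP2val :=
  stmt14_general c f s d b Γ Sfin hS APval RP1val RP2val hAP hRP1 hRP2
end
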